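/- arXiv:1405.4339 — 2 statements merged into one kernel-verified Lean document; each statement's English description precedes it below -/
import Mathlib

section
/- Let φ : ℝ → ℝ be continuous and integrable with φ(y) ≥ 0 for all y (or φ(y) ≤ 0 for all y), and define g(y) = (1/2) ∫_{-∞}^{∞} e^{-|y-y'|} φ(y') dy'. Then |g'(y)| ≤ |g(y)| for all y ∈ ℝ. -/
/-!
Split the kernel at `y`: with `L(y) = ∫_{-∞}^y e^t φ(t) dt` and `R(y) = ∫_y^∞ e^{-t} φ(t) dt`,
`2g = e^{-y} L + e^{y} R` and `2g' = e^{y} R - e^{-y} L`, so `g² - (g')² = L R`.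
When `φ` has constant sign, `L` and `R` share that sign, hence `L R ≥ 0` and `|g'| ≤ |g|`.
-/

open MeasureTheory Real Set

section OneSidedIntegrals

variable {E : Type*} [NormedAddCommGroup E] [NormedSpace ℝ E] [CompleteSpace E] {f : ℝ → E}

theorem hasDerivAt_setIntegral_Iic (hf : Continuous f) (hint : ∀ a, IntegrableOn f (Iic a))
    (y : ℝ) : HasDerivAt (fun u => ∫ t in Iic u, f t) (f y) y := by
  have hsplit : (fun u => ∫ t in Iic u, f t) =
      fun u => (∫ t in Iic 0, f t) + ∫ t in (0 : ℝ)..u, f t := by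
    funext u
    rw [← intervalIntegral.integral_Iic_sub_Iic (hint 0) (hint u), add_sub_cancel]
  rw [hsplit]
  exact (intervalIntegral.integral_hasDerivAt_right (hf.intervalIntegrable 0 y)
    (hf.stronglyMeasurableAtFilter _ _) hf.continuousAt).const_add _

theorem hasDerivAt_setIntegral_Ioi (hf : Continuous f) (hint : ∀ a, IntegrableOn f (Ioi a))
    (y : ℝ) : HasDerivAt (fun u => ∫ t in Ioi u, f t) (-f y) y := by
  have hsplit : (fun u => ∫ t in Ioi u, f t) =
      fun u => (∫ t in Ioi 0, f t) - ∫ t in (0 : ℝ)..u, f t := by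
    funext u
    rw [← intervalIntegral.integral_Ioi_sub_Ioi' (hint 0) (hint u), sub_sub_cancel]
  rw [hsplit]
  exact (intervalIntegral.integral_hasDerivAt_right (hf.intervalIntegrable 0 y)
    (hf.stronglyMeasurableAtFilter _ _) hf.continuousAt).const_sub _

end OneSidedIntegrals

noncomputable def leftExpIntegral (φ : ℝ → ℝ) (y : ℝ) : ℝ := ∫ t in Iic y, exp t * φ t

noncomputable def rightExpIntegral (φ : ℝ → ℝ) (y : ℝ) : ℝ := ∫ t in Ioi y, exp (-t) * φ t

section ExpIntegrals

variable {φ : ℝ → ℝ}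

theorem MeasureTheory.Integrable.integrableOn_exp_mul_Iic (hφ : Integrable φ) (b : ℝ) :
    IntegrableOn (fun t => exp t * φ t) (Iic b) :=
  hφ.integrableOn.bdd_mul (c := exp b) continuous_exp.aestronglyMeasurable <|
    ae_restrict_of_forall_mem measurableSet_Iic fun t ht => by
      rw [norm_of_nonneg (exp_pos t).le]
      exact exp_le_exp.2 ht

theorem MeasureTheory.Integrable.integrableOn_exp_neg_mul_Ioi (hφ : Integrable φ) (b : ℝ) :
    IntegrableOn (fun t => exp (-t) * φ t) (Ioi b) :=
  hφ.integrableOn.bdd_mul (c := exp (-b))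
    (by fun_prop : Continuous fun t => exp (-t)).aestronglyMeasurable <|
    ae_restrict_of_forall_mem measurableSet_Ioi fun t ht => by
      rw [norm_of_nonneg (exp_pos _).le]
      exact exp_le_exp.2 (neg_le_neg (le_of_lt ht))

theorem MeasureTheory.Integrable.exp_neg_abs_sub_mul (hφ : Integrable φ) (y : ℝ) :
    Integrable fun t => exp (-|y - t|) * φ t :=
  hφ.bdd_mul (c := 1) (by fun_prop : Continuous fun t => exp (-|y - t|)).aestronglyMeasurable <|
    ae_of_all _ fun t => by
      rw [norm_of_nonneg (exp_pos _).le, exp_le_one_iff, neg_nonpos]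
      exact abs_nonneg _

theorem integral_exp_neg_abs_sub_mul (hφ : Integrable φ) (y : ℝ) :
    ∫ t, exp (-|y - t|) * φ t =
      exp (-y) * leftExpIntegral φ y + exp y * rightExpIntegral φ y := by
  have hk := hφ.exp_neg_abs_sub_mul y
  rw [← intervalIntegral.integral_Iic_add_Ioi hk.integrableOn hk.integrableOn, leftExpIntegral,
    rightExpIntegral, ← integral_const_mul, ← integral_const_mul]
  congr 1
  · refine setIntegral_congr_fun measurableSet_Iic fun t ht => ?_
    rw [abs_of_nonneg (sub_nonneg.2 ht), ← mul_assoc, ← exp_add]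
    ring_nf
  · refine setIntegral_congr_fun measurableSet_Ioi fun t ht => ?_
    rw [abs_of_neg (sub_neg.2 ht), ← mul_assoc, ← exp_add]
    ring_nf

theorem hasDerivAt_leftExpIntegral (hcont : Continuous φ) (hφ : Integrable φ) (y : ℝ) :
    HasDerivAt (leftExpIntegral φ) (exp y * φ y) y :=
  hasDerivAt_setIntegral_Iic (by fun_prop) hφ.integrableOn_exp_mul_Iic y

theorem hasDerivAt_rightExpIntegral (hcont : Continuous φ) (hφ : Integrable φ) (y : ℝ) :
    HasDerivAt (rightExpIntegral φ) (-(exp (-y) * φ y)) y :=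
  hasDerivAt_setIntegral_Ioi (by fun_prop) hφ.integrableOn_exp_neg_mul_Ioi y

theorem hasDerivAt_exp_neg_mul_leftExpIntegral_add (hcont : Continuous φ) (hφ : Integrable φ)
    (y : ℝ) :
    HasDerivAt (fun u => exp (-u) * leftExpIntegral φ u + exp u * rightExpIntegral φ u)
      (exp y * rightExpIntegral φ y - exp (-y) * leftExpIntegral φ y) y := by
  have hL := ((hasDerivAt_neg y).exp).mul (hasDerivAt_leftExpIntegral hcont hφ y)
  have hR := (hasDerivAt_exp y).mul (hasDerivAt_rightExpIntegral hcont hφ y)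
  exact (hL.add hR).congr_deriv (by ring)

theorem leftExpIntegral_mul_rightExpIntegral_nonneg
    (hsign : (∀ y, 0 ≤ φ y) ∨ (∀ y, φ y ≤ 0)) (y : ℝ) :
    0 ≤ leftExpIntegral φ y * rightExpIntegral φ y := by
  rcases hsign with hpos | hneg
  · exact mul_nonneg
      (setIntegral_nonneg measurableSet_Iic fun t _ => mul_nonneg (exp_pos _).le (hpos t))
      (setIntegral_nonneg measurableSet_Ioi fun t _ => mul_nonneg (exp_pos _).le (hpos t))
  · exact mul_nonneg_of_nonpos_of_nonpos
      (setIntegral_nonpos measurableSet_Iic fun t _ =>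
        mul_nonpos_of_nonneg_of_nonpos (exp_pos _).le (hneg t))
      (setIntegral_nonpos measurableSet_Ioi fun t _ =>
        mul_nonpos_of_nonneg_of_nonpos (exp_pos _).le (hneg t))

theorem sq_sub_deriv_sq_eq_leftExpIntegral_mul_rightExpIntegral (hcont : Continuous φ)
    (hφ : Integrable φ) {g : ℝ → ℝ} (hg : ∀ y, g y = (1/2) * ∫ y' : ℝ, exp (-|y - y'|) * φ y')
    (y : ℝ) :
    g y ^ 2 - deriv g y ^ 2 = leftExpIntegral φ y * rightExpIntegral φ y := by
  have hg' :
      g = fun u => (1/2) * (exp (-u) * leftExpIntegral φ u + exp u * rightExpIntegral φ u) :=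
    funext fun u => by rw [hg, integral_exp_neg_abs_sub_mul hφ]
  have hderiv := ((hasDerivAt_exp_neg_mul_leftExpIntegral_add hcont hφ y).const_mul (1/2)).deriv
  rw [← hg'] at hderiv
  have hexp : exp (-y) * exp y = 1 := by rw [← exp_add, neg_add_cancel, exp_zero]
  rw [hderiv, hg']
  linear_combination (leftExpIntegral φ y * rightExpIntegral φ y) * hexp

end ExpIntegrals

theorem stmt_4 (φ : ℝ → ℝ) (hcont : Continuous φ) (hint : Integrable φ)
    (hsign : (∀ y, 0 ≤ φ y) ∨ (∀ y, φ y ≤ 0))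
    (g : ℝ → ℝ)
    (hg : ∀ y, g y = (1/2) * ∫ y' : ℝ, Real.exp (-|y - y'|) * φ y') :
    ∀ y, |deriv g y| ≤ |g y| := by
  intro y
  have hfactor := sq_sub_deriv_sq_eq_leftExpIntegral_mul_rightExpIntegral hcont hint hg y
  have hnonneg := leftExpIntegral_mul_rightExpIntegral_nonneg hsign y
  exact sq_le_sq.mp (by linarith)
end

section
/- Let T > 0 and let γ : [0,T) × ℝ → ℝ, g : [0,T) × ℝ → ℝ, φ : [0,T) × ℝ → ℝ be smooth functions such that: (i) ∂_t γ(t,y) = γ(t,y) g(t, γ(t,y)) with γ(0,y) = y; (ii) φ_t(t,y) + y g(t,y) φ_y(t,y) = (y g_y(t,y) - 4 g(t,y)) φ(t,y). Then for all t ∈ [0,T) and y ∈ ℝ with y ≠ 0 and γ(t,y) ≠ 0: φ(t, γ(t,y)) · γ(t,y)^5 = φ(0,y) · y^5 · ∂_y γ(t,y). -/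
open MeasureTheory Real Set

private lemma aux_fst {f : ℝ → ℝ → ℝ}
    (hf : ContDiff ℝ (⊤ : ℕ∞) (fun p : ℝ × ℝ => f p.1 p.2)) (t y : ℝ) :
    HasDerivAt (fun s => f s y)
      (fderiv ℝ (fun p : ℝ × ℝ => f p.1 p.2) (t, y) (1, 0)) t :=
  by have := (hf.differentiable (by simp) (t, y)).hasFDerivAt.comp_hasDerivAt t
      (HasDerivAt.prodMk (hasDerivAt_id t) (hasDerivAt_const t y)); exact this

private lemma aux_snd {f : ℝ → ℝ → ℝ}
    (hf : ContDiff ℝ (⊤ : ℕ∞) (fun p : ℝ × ℝ => f p.1 p.2)) (t y : ℝ) :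
    HasDerivAt (fun z => f t z)
      (fderiv ℝ (fun p : ℝ × ℝ => f p.1 p.2) (t, y) (0, 1)) y :=
  by have := (hf.differentiable (by simp) (t, y)).hasFDerivAt.comp_hasDerivAt y
      (HasDerivAt.prodMk (hasDerivAt_const y t) (hasDerivAt_id y)); exact this

theorem stmt_5 (T : ℝ) (hT : 0 < T) (γ g φ : ℝ → ℝ → ℝ)
    (hγsmooth : ContDiff ℝ (⊤ : ℕ∞) (fun p : ℝ × ℝ => γ p.1 p.2))
    (hgsmooth : ContDiff ℝ (⊤ : ℕ∞) (fun p : ℝ × ℝ => g p.1 p.2))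
    (hφsmooth : ContDiff ℝ (⊤ : ℕ∞) (fun p : ℝ × ℝ => φ p.1 p.2))
    (hflow : ∀ t ∈ Ico 0 T, ∀ y : ℝ,
      HasDerivAt (fun s => γ s y) (γ t y * g t (γ t y)) t)
    (hγ0 : ∀ y : ℝ, γ 0 y = y)
    (hpde : ∀ t ∈ Ico 0 T, ∀ y : ℝ,
      deriv (fun s => φ s y) t + y * g t y * deriv (fun z => φ t z) y
        = (y * deriv (fun z => g t z) y - 4 * g t y) * φ t y) :
    ∀ t ∈ Ico 0 T, ∀ y : ℝ, y ≠ 0 → γ t y ≠ 0 →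
      φ t (γ t y) * (γ t y) ^ 5 = φ 0 y * y ^ 5 * deriv (fun z => γ t z) y := by
  intro t ht y _ _
  -- notation
  have hF : ContDiff ℝ (⊤ : ℕ∞) (fderiv ℝ (fun p : ℝ × ℝ => γ p.1 p.2)) :=
    hγsmooth.fderiv_right (by simp)
  set Γ : ℝ × ℝ → ℝ := fun p => γ p.1 p.2 with hΓdef
  set Gm : ℝ × ℝ → ℝ := fun p => g p.1 p.2 with hGmdef
  set F : ℝ × ℝ → (ℝ × ℝ) →L[ℝ] ℝ := fderiv ℝ Γ with hFdef
  set B : ℝ → ℝ := fun s => F (s, y) (0, 1) with hBdef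
  set A : ℝ → ℝ := fun s => φ s (γ s y) * (γ s y) ^ 5 with hAdef
  set k : ℝ → ℝ := fun s => g s (γ s y) + γ s y * fderiv ℝ Gm (s, γ s y) (0, 1)
    with hkdef
  set c : ℝ := φ 0 y * y ^ 5 with hcdef
  set H : ℝ → ℝ := fun s => A s - c * B s with hHdef
  -- derivative of A
  have hA : ∀ s ∈ Ico (0:ℝ) T, HasDerivAt A (k s * A s) s := by
    intro s hs
    have hus : HasDerivAt (fun r => γ r y) (γ s y * g s (γ s y)) s := hflow s hs y
    have hgy : HasDerivAt (fun z => g s z) (fderiv ℝ Gm (s, γ s y) (0, 1)) (γ s y) :=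
      aux_snd hgsmooth s (γ s y)
    have hcurve : HasDerivAt (fun r => (r, γ r y))
        ((1 : ℝ), γ s y * g s (γ s y)) s := HasDerivAt.prodMk (hasDerivAt_id s) hus
    have hφtot : HasDerivAt (fun r => φ r (γ r y))
        (fderiv ℝ (fun p : ℝ × ℝ => φ p.1 p.2) (s, γ s y)
          (1, γ s y * g s (γ s y))) s :=
      by have := (hφsmooth.differentiable (by simp) (s, γ s y)).hasFDerivAt.comp_hasDerivAt s hcurve; exact this
    have hsplit : fderiv ℝ (fun p : ℝ × ℝ => φ p.1 p.2) (s, γ s y)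
        (1, γ s y * g s (γ s y))
        = deriv (fun r => φ r (γ s y)) s
          + γ s y * g s (γ s y) * deriv (fun z => φ s z) (γ s y) := by
      rw [(aux_fst hφsmooth s (γ s y)).deriv, (aux_snd hφsmooth s (γ s y)).deriv]
      have hv : ((1 : ℝ), γ s y * g s (γ s y))
          = ((1 : ℝ), (0 : ℝ)) + (γ s y * g s (γ s y)) • ((0 : ℝ), (1 : ℝ)) := by
        simp [Prod.ext_iff]
      rw [hv, map_add, ContinuousLinearMap.map_smul, smul_eq_mul]
    have hpdeu := hpde s hs (γ s y)
    rw [hgy.deriv] at hpdeu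
    have hφflow : HasDerivAt (fun r => φ r (γ r y))
        ((γ s y * fderiv ℝ Gm (s, γ s y) (0, 1) - 4 * g s (γ s y)) * φ s (γ s y)) s := by
      have : fderiv ℝ (fun p : ℝ × ℝ => φ p.1 p.2) (s, γ s y)
          (1, γ s y * g s (γ s y))
          = (γ s y * fderiv ℝ Gm (s, γ s y) (0, 1) - 4 * g s (γ s y)) * φ s (γ s y) := by
        rw [hsplit, hpdeu]
      exact this ▸ hφtot
    have hu5 : HasDerivAt (fun r => (γ r y) ^ 5)
        (5 * (γ s y) ^ 4 * (γ s y * g s (γ s y))) s := by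
      have h5 := hus.pow 5
      norm_num at h5
      exact h5
    have hmul := hφflow.mul hu5
    refine hmul.congr_deriv ?_
    simp only [hkdef, hAdef]
    ring
  -- derivative of B
  have hBd : ∀ s ∈ Ico (0:ℝ) T, HasDerivAt B (k s * B s) s := by
    intro s hs
    have hF' : HasFDerivAt F (fderiv ℝ F (s, y)) (s, y) :=
      (hF.differentiable (by simp) (s, y)).hasFDerivAt
    have hcurve : HasDerivAt (fun r : ℝ => (r, y)) ((1 : ℝ), (0 : ℝ)) s :=
      HasDerivAt.prodMk (hasDerivAt_id s) (hasDerivAt_const s y)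
    have h1 : HasDerivAt (fun r => F (r, y)) (fderiv ℝ F (s, y) (1, 0)) s :=
      hF'.comp_hasDerivAt s hcurve
    have h2 : HasDerivAt B ((fderiv ℝ F (s, y) (1, 0)) (0, 1)) s :=
      (ContinuousLinearMap.apply ℝ ℝ ((0 : ℝ), (1 : ℝ))).hasFDerivAt.comp_hasDerivAt s h1
    have hsym : (fderiv ℝ F (s, y) (1, 0)) (0, 1) = (fderiv ℝ F (s, y) (0, 1)) (1, 0) :=
      second_derivative_symmetric
        (fun p => (hγsmooth.differentiable (by simp) p).hasFDerivAt) hF' _ _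
    have hc2 : HasDerivAt (fun z : ℝ => (s, z)) ((0 : ℝ), (1 : ℝ)) y :=
      HasDerivAt.prodMk (hasDerivAt_const y s) (hasDerivAt_id y)
    have h3 : HasDerivAt (fun z => F (s, z) (1, 0))
        ((fderiv ℝ F (s, y) (0, 1)) (1, 0)) y :=
      (ContinuousLinearMap.apply ℝ ℝ ((1 : ℝ), (0 : ℝ))).hasFDerivAt.comp_hasDerivAt y
        (hF'.comp_hasDerivAt y hc2)
    have hfun : (fun z => F (s, z) ((1 : ℝ), (0 : ℝ)))
        = fun z => γ s z * g s (γ s z) := by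
      funext z
      exact (aux_fst hγsmooth s z).unique (hflow s hs z)
    rw [hfun] at h3
    have hγz : HasDerivAt (fun z => γ s z) (B s) y := aux_snd hγsmooth s y
    have hgz : HasDerivAt (fun z => g s z) (fderiv ℝ Gm (s, γ s y) (0, 1)) (γ s y) :=
      aux_snd hgsmooth s (γ s y)
    have h4 : HasDerivAt (fun z => γ s z * g s (γ s z))
        (B s * g s (γ s y) + γ s y * (fderiv ℝ Gm (s, γ s y) (0, 1) * B s)) y :=
      hγz.mul (hgz.comp y hγz)
    have heq := h3.unique h4
    convert h2 using 1
    rw [hsym, heq]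
    simp only [hkdef]
    ring
  -- derivative of H
  have hHd : ∀ s ∈ Ico (0:ℝ) T, HasDerivAt H (k s * H s) s := by
    intro s hs
    have := (hA s hs).sub ((hBd s hs).const_mul c)
    refine this.congr_deriv ?_
    simp only [hHdef]
    ring
  -- initial condition
  have hB0 : B 0 = 1 := by
    have hγz : HasDerivAt (fun z => γ 0 z) (B 0) y := aux_snd hγsmooth 0 y
    have : (fun z => γ 0 z) = fun z => z := funext hγ0
    rw [this] at hγz
    exact hγz.unique (hasDerivAt_id y)
  have hH0 : H 0 = 0 := by
    simp only [hHdef, hAdef, hcdef, hB0, hγ0 y]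
    ring
  -- continuity
  have hu_cont : Continuous (fun s : ℝ => γ s y) :=
    hγsmooth.continuous.comp (continuous_id.prodMk continuous_const)
  have hA_cont : Continuous A :=
    (hφsmooth.continuous.comp (continuous_id.prodMk hu_cont)).mul (hu_cont.pow 5)
  have hB_cont : Continuous B :=
    (ContinuousLinearMap.apply ℝ ℝ ((0 : ℝ), (1 : ℝ))).continuous.comp
      (hF.continuous.comp (continuous_id.prodMk continuous_const))
  have hH_cont : Continuous H := hA_cont.sub (continuous_const.mul hB_cont)
  have hk_cont : Continuous k := by
    have hGF : ContDiff ℝ (⊤ : ℕ∞) (fderiv ℝ Gm) := hgsmooth.fderiv_right (by simp)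
    exact (hgsmooth.continuous.comp (continuous_id.prodMk hu_cont)).add
      (hu_cont.mul ((ContinuousLinearMap.apply ℝ ℝ ((0 : ℝ), (1 : ℝ))).continuous.comp
        (hGF.continuous.comp (continuous_id.prodMk hu_cont))))
  -- Gronwall
  obtain ⟨s₀, hs₀, hmax⟩ := isCompact_Icc.exists_isMaxOn (nonempty_Icc.mpr ht.1)
    ((continuous_abs.comp hk_cont).continuousOn (s := Icc 0 t))
  have hHt0 : H t = 0 := by
    have key := norm_le_gronwallBound_of_norm_deriv_right_le (K := |k s₀|) (ε := 0) (δ := 0)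
      (hH_cont.continuousOn (s := Icc 0 t))
      (fun s hs => ((hHd s ⟨hs.1, hs.2.trans ht.2⟩).hasDerivWithinAt))
      (by rw [hH0]; simp)
      (fun s hs => by
        rw [Real.norm_eq_abs, Real.norm_eq_abs, abs_mul, add_zero]
        exact mul_le_mul_of_nonneg_right (hmax (Ico_subset_Icc_self hs)) (abs_nonneg _))
      t ⟨ht.1, le_refl t⟩
    rw [gronwallBound_ε0_δ0] at key
    have : |H t| ≤ 0 := by rwa [Real.norm_eq_abs] at key
    exact abs_eq_zero.mp (le_antisymm this (abs_nonneg _))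
  -- conclusion
  have hderiv : deriv (fun z => γ t z) y = B t := (aux_snd hγsmooth t y).deriv
  rw [hderiv]
  have : A t - c * B t = 0 := hHt0
  simp only [hAdef, hcdef] at this ⊢
  linarith
end
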